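/- arXiv:2103.01294 — 2 statements merged into one kernel-verified Lean document; each statement's English description precedes it below -/
import Mathlib

section
/- Let L : ℝ^p → ℝ be convex and differentiable with K-Lipschitz gradient, where K > 0, let w* ∈ ℝ^p satisfy ∇L(w*) = 0, let 0 < η ≤ 2/K, and let D_w ≥ 0. Let T be a positive integer, let Δ₁, …, Δ_T ∈ ℝ^p, and let w₁, …, w_{T+1} ∈ ℝ^p satisfy w_{t+1} = w_t − ηΔ_t for t = 1, …, T, with ‖w₁ − w*‖ ≤ D_w. Setting A_t = Δ_t − ∇L(w_t), one has (2η − Kη²) · ∑_{t=1}^T (L(w_t) − L(w*)) ≤ D_w² − 2η ∑_{t=1}^T ⟨w_t − η∇L(w_t) − w*, A_t⟩ + η² ∑_{t=1}^T ‖A_t‖². -/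
/-!
Co-coercivity of the gradient of a convex function with `K`-Lipschitz gradient,
`L x + ⟪∇L x, y - x⟫ + ‖∇L y - ∇L x‖² / (2K) ≤ L y`, applied at the minimiser `w⋆` shows that an
exact gradient step of size `η ≤ 2 / K` decreases `‖w - w⋆‖²` by at least
`(2η - Kη²) (L w - L w⋆)`. The actual step differs from the exact one by `-η A_t`, which changes
`‖w_{t+1} - w⋆‖²` by exactly `-2η ⟪w_t - η ∇L w_t - w⋆, A_t⟫ + η² ‖A_t‖²`; summing over `t`
telescopes.
-/

open RealInnerProductSpace

section LipschitzGradient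

variable {E : Type*} [NormedAddCommGroup E] [InnerProductSpace ℝ E] [CompleteSpace E]
  {L : E → ℝ}

theorem HasGradientAt.hasDerivAt_comp_add_smul {g x v : E} {s : ℝ}
    (h : HasGradientAt L g (x + s • v)) :
    HasDerivAt (fun s : ℝ => L (x + s • v)) ⟪g, v⟫ s := by
  have hline : HasDerivAt (fun s : ℝ => x + s • v) v s :=
    ((hasDerivAt_id s).smul_const v).const_add x |>.congr_deriv (one_smul ℝ v)
  simpa [InnerProductSpace.toDual_apply_apply, Function.comp_def] using
    h.hasFDerivAt.comp_hasDerivAt s hline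

theorem ConvexOn.apply_add_inner_gradient_le (hconv : ConvexOn ℝ Set.univ L) {x : E}
    (hx : DifferentiableAt ℝ L x) (y : E) :
    L x + ⟪gradient L x, y - x⟫ ≤ L y := by
  have hφ : ConvexOn ℝ Set.univ (fun s : ℝ => L (x + s • (y - x))) := by
    simpa [Function.comp_def, AffineMap.lineMap_apply, add_comm] using
      hconv.comp_affineMap (AffineMap.lineMap x y : ℝ →ᵃ[ℝ] E)
  have hderiv : HasDerivAt (fun s : ℝ => L (x + s • (y - x))) ⟪gradient L x, y - x⟫ 0 :=
    HasGradientAt.hasDerivAt_comp_add_smul (by simpa using hx.hasGradientAt)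
  have := hφ.le_slope_of_hasDerivAt (Set.mem_univ 0) (Set.mem_univ 1) one_pos hderiv
  simp only [slope_def_field, zero_smul, one_smul, add_zero, add_sub_cancel, sub_zero,
    div_one] at this
  linarith

theorem apply_le_add_inner_gradient_add_sq {K : ℝ} (hdiff : Differentiable ℝ L)
    (hlip : ∀ u v : E, ‖gradient L u - gradient L v‖ ≤ K * ‖u - v‖) (x y : E) :
    L y ≤ L x + ⟪gradient L x, y - x⟫ + K / 2 * ‖y - x‖ ^ 2 := by
  set v := y - x
  set φ : ℝ → ℝ := fun s => L (x + s • v) - s * ⟪gradient L x, v⟫ - K / 2 * ‖v‖ ^ 2 * s ^ 2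
  have hφ' : ∀ s, HasDerivAt φ
      (⟪gradient L (x + s • v) - gradient L x, v⟫ - K * ‖v‖ ^ 2 * s) s := by
    intro s
    have h := (((hdiff (x + s • v)).hasGradientAt.hasDerivAt_comp_add_smul).sub
      ((hasDerivAt_id s).mul_const ⟪gradient L x, v⟫)).sub
      ((hasDerivAt_pow 2 s).const_mul (K / 2 * ‖v‖ ^ 2))
    refine h.congr_deriv ?_
    rw [inner_sub_left]
    simp only [Nat.cast_ofNat]
    ring
  have hanti : AntitoneOn φ (Set.Ici 0) := by
    refine antitoneOn_of_hasDerivWithinAt_nonpos (convex_Ici 0)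
      (fun s _ => (hφ' s).continuousAt.continuousWithinAt)
      (fun s _ => (hφ' s).hasDerivWithinAt) fun s hs => ?_
    rw [interior_Ici, Set.mem_Ioi] at hs
    calc ⟪gradient L (x + s • v) - gradient L x, v⟫ - K * ‖v‖ ^ 2 * s
        ≤ K * ‖(x + s • v) - x‖ * ‖v‖ - K * ‖v‖ ^ 2 * s := by
          gcongr
          exact (real_inner_le_norm _ _).trans
            (mul_le_mul_of_nonneg_right (hlip _ _) (norm_nonneg _))
      _ = 0 := by
          rw [add_sub_cancel_left, norm_smul, Real.norm_of_nonneg hs.le]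
          ring
  have := hanti (Set.mem_Ici.2 le_rfl) (Set.mem_Ici.2 zero_le_one) zero_le_one
  simp only [φ, v, zero_smul, add_zero, zero_mul, sub_zero, one_smul, add_sub_cancel, one_mul,
    one_pow, mul_one] at this
  linarith

theorem ConvexOn.apply_add_inner_gradient_add_sq_le {K : ℝ} (hconv : ConvexOn ℝ Set.univ L)
    (hdiff : Differentiable ℝ L) (hK : 0 < K)
    (hlip : ∀ u v : E, ‖gradient L u - gradient L v‖ ≤ K * ‖u - v‖) (x y : E) :
    L x + ⟪gradient L x, y - x⟫ + ‖gradient L y - gradient L x‖ ^ 2 / (2 * K) ≤ L y := by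
  set u := gradient L y - gradient L x
  -- `z` minimises the quadratic upper bound of `L - ⟪∇L x, ·⟫` around `y`.
  set z := y - K⁻¹ • u
  have hlow := hconv.apply_add_inner_gradient_le (hdiff x) z
  have hup := apply_le_add_inner_gradient_add_sq hdiff hlip y z
  have hzx : z - x = (y - x) - K⁻¹ • u := sub_right_comm y _ x
  have hzy : z - y = -(K⁻¹ • u) := sub_sub_cancel_left y _
  have hu : ⟪gradient L y, u⟫ = ⟪gradient L x, u⟫ + ‖u‖ ^ 2 := by
    rw [← real_inner_self_eq_norm_sq, ← inner_add_left, add_sub_cancel]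
  rw [hzx, inner_sub_right, real_inner_smul_right] at hlow
  rw [hzy, inner_neg_right, real_inner_smul_right, hu, norm_neg, norm_smul,
    Real.norm_of_nonneg (inv_nonneg.2 hK.le)] at hup
  have hquad : K / 2 * (K⁻¹ * ‖u‖) ^ 2 = K⁻¹ * ‖u‖ ^ 2 - ‖u‖ ^ 2 / (2 * K) := by
    field_simp
    ring
  rw [hquad] at hup
  linarith

theorem ConvexOn.norm_sub_smul_gradient_sub_sq_le {K η : ℝ} {xstar : E}
    (hconv : ConvexOn ℝ Set.univ L) (hdiff : Differentiable ℝ L) (hK : 0 < K)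
    (hlip : ∀ u v : E, ‖gradient L u - gradient L v‖ ≤ K * ‖u - v‖)
    (hstar : gradient L xstar = 0) (hη0 : 0 ≤ η) (hη : η ≤ 2 / K) (x : E) :
    ‖x - η • gradient L x - xstar‖ ^ 2 ≤
      ‖x - xstar‖ ^ 2 - (2 * η - K * η ^ 2) * (L x - L xstar) := by
  have hgap := hconv.apply_add_inner_gradient_add_sq_le hdiff hK hlip xstar x
  have hcoer := hconv.apply_add_inner_gradient_add_sq_le hdiff hK hlip x xstar
  rw [hstar, inner_zero_left, add_zero, sub_zero] at hgap
  rw [hstar, zero_sub, norm_neg, ← neg_sub x xstar, inner_neg_right] at hcoer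
  have hKη : K * η ≤ 2 := by rwa [le_div_iff₀ hK, mul_comm] at hη
  set g := gradient L x
  set G := ‖g‖ ^ 2 / (2 * K)
  have hgG : ‖g‖ ^ 2 = 2 * K * G := by simp only [G]; field_simp
  have hG : 0 ≤ G := by positivity
  rw [sub_right_comm, norm_sub_sq_real, real_inner_smul_right, norm_smul, mul_pow,
    Real.norm_of_nonneg hη0, real_inner_comm, hgG]
  -- `⟪x - x⋆, g⟫ ≥ L x - L x⋆ + G` and `L x - L x⋆ ≥ G ≥ 0` suffice because `Kη ≤ 2`.
  nlinarith [mul_le_mul_of_nonneg_left hcoer hη0, mul_nonneg hη0 (sub_nonneg.2 hKη),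
    mul_le_mul_of_nonneg_left hgap (mul_nonneg (mul_nonneg hη0 hη0) hK.le), hG]

end LipschitzGradient

theorem Finset.sum_range_le_sub_add_sum {M : Type*} [AddCommGroup M] [PartialOrder M]
    [IsOrderedAddMonoid M] {f c d : ℕ → M} {T : ℕ}
    (h : ∀ t ∈ Finset.range T, f t ≤ d t - d (t + 1) + c t) :
    ∑ t ∈ Finset.range T, f t ≤ d 0 - d T + ∑ t ∈ Finset.range T, c t := by
  calc ∑ t ∈ Finset.range T, f t ≤ ∑ t ∈ Finset.range T, (d t - d (t + 1) + c t) :=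
        Finset.sum_le_sum h
    _ = d 0 - d T + ∑ t ∈ Finset.range T, c t := by
        rw [Finset.sum_add_distrib, Finset.sum_range_sub']

theorem stmt_5_general (p : ℕ) (K : ℝ) (hK : 0 < K)
    (L : EuclideanSpace ℝ (Fin p) → ℝ)
    (hconv : ConvexOn ℝ Set.univ L)
    (hdiff : Differentiable ℝ L)
    (hlip : ∀ u v : EuclideanSpace ℝ (Fin p),
      ‖gradient L u - gradient L v‖ ≤ K * ‖u - v‖)
    (wstar : EuclideanSpace ℝ (Fin p)) (hstar : gradient L wstar = 0)
    (η : ℝ) (hη0 : 0 < η) (hη : η ≤ 2 / K)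
    (Dw : ℝ)
    (T : ℕ)
    (Δ : ℕ → EuclideanSpace ℝ (Fin p)) (w : ℕ → EuclideanSpace ℝ (Fin p))
    (hupdate : ∀ t ∈ Finset.range T, w (t + 1) = w t - η • Δ t)
    (hinit : ‖w 0 - wstar‖ ≤ Dw)
    (A : ℕ → EuclideanSpace ℝ (Fin p))
    (hA : ∀ t, A t = Δ t - gradient L (w t)) :
    (2 * η - K * η ^ 2) * ∑ t ∈ Finset.range T, (L (w t) - L wstar) ≤
      Dw ^ 2 - 2 * η * ∑ t ∈ Finset.range T, ⟪w t - η • gradient L (w t) - wstar, A t⟫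
        + η ^ 2 * ∑ t ∈ Finset.range T, ‖A t‖ ^ 2 := by
  have hstep : ∀ t ∈ Finset.range T, (2 * η - K * η ^ 2) * (L (w t) - L wstar) ≤
      ‖w t - wstar‖ ^ 2 - ‖w (t + 1) - wstar‖ ^ 2 +
        (-(2 * η) * ⟪w t - η • gradient L (w t) - wstar, A t⟫ + η ^ 2 * ‖A t‖ ^ 2) := by
    intro t ht
    have hexact := hconv.norm_sub_smul_gradient_sub_sq_le hdiff hK hlip hstar hη0.le hη (w t)
    have hnext : w (t + 1) - wstar = (w t - η • gradient L (w t) - wstar) - η • A t := by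
      rw [hupdate t ht, hA t]
      module
    rw [hnext, norm_sub_sq_real _ (η • A t), real_inner_smul_right, norm_smul, mul_pow,
      Real.norm_of_nonneg hη0.le]
    linarith
  have hsum := Finset.sum_range_le_sub_add_sum hstep
  rw [Finset.sum_add_distrib, ← Finset.mul_sum, ← Finset.mul_sum, ← Finset.mul_sum] at hsum
  linarith [pow_le_pow_left₀ (norm_nonneg _) hinit 2, sq_nonneg ‖w T - wstar‖]

theorem stmt_5 (p : ℕ) (K : ℝ) (hK : 0 < K)
    (L : EuclideanSpace ℝ (Fin p) → ℝ)
    (hconv : ConvexOn ℝ Set.univ L)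
    (hdiff : Differentiable ℝ L)
    (hlip : ∀ u v : EuclideanSpace ℝ (Fin p),
      ‖gradient L u - gradient L v‖ ≤ K * ‖u - v‖)
    (wstar : EuclideanSpace ℝ (Fin p)) (hstar : gradient L wstar = 0)
    (η : ℝ) (hη0 : 0 < η) (hη : η ≤ 2 / K)
    (Dw : ℝ) (hDw : 0 ≤ Dw)
    (T : ℕ) (hT : 0 < T)
    (Δ : ℕ → EuclideanSpace ℝ (Fin p)) (w : ℕ → EuclideanSpace ℝ (Fin p))
    (hupdate : ∀ t ∈ Finset.range T, w (t + 1) = w t - η • Δ t)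
    (hinit : ‖w 0 - wstar‖ ≤ Dw)
    (A : ℕ → EuclideanSpace ℝ (Fin p))
    (hA : ∀ t, A t = Δ t - gradient L (w t)) :
    (2 * η - K * η ^ 2) * ∑ t ∈ Finset.range T, (L (w t) - L wstar) ≤
      Dw ^ 2 - 2 * η * ∑ t ∈ Finset.range T, ⟪w t - η • gradient L (w t) - wstar, A t⟫
        + η ^ 2 * ∑ t ∈ Finset.range T, ‖A t‖ ^ 2 :=
  stmt_5_general p K hK L hconv hdiff hlip wstar hstar η hη0 hη Dw T Δ w hupdate hinit A hA
end

section
/- Let p be a positive integer, let L : ℝ^p → ℝ be convex and differentiable with K-Lipschitz gradient (K > 0), and let w* ∈ ℝ^p satisfy ∇L(w*) = 0. Let G, D_w ≥ 0 with ‖∇L(w)‖ ≤ G for all w ∈ ℝ^p. Let (Ω, ℱ, ℙ) be a probability space, T a positive integer, and for t = 1, …, T let w_t, ∇_t, Δ_t : Ω → ℝ^p be square-integrable random vectors such that: (i) w_{t+1} = w_t − η·Δ_t almost surely for t = 1, …, T−1; (ii) each w_t is measurable with respect to a sub-σ-algebra 𝒢_t, each Δ_t and ∇_t is measurable, and 𝔼[∇_t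 | 𝒢_t] = ∇L(w_t) almost surely; (iii) ‖w_t − w*‖ ≤ D_w almost surely for all t. Let σ > 0 and B ≥ 0 satisfy, for all t, 2·𝔼[‖∇_t − ∇L(w_t)‖²] + 2·𝔼[‖∇_t − Δ_t‖²] ≤ σ² and 2·𝔼[‖∇_t − Δ_t‖²] ≤ B². If η = min(1/K, D_w/(σ·√T)), then 𝔼[(1/T) ∑_{t=1}^T (L(w_t) − L(w*))] ≤ D_w²·K/T + D_w·σ/√T + 2·B·D_w·(1 + G/(σ·√T)). -/
/-!
Every step is compared with an exact gradient step. For convex `L` with `K`-Lipschitz gradient,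
co-coercivity `‖∇L x‖² ≤ K ⟪∇L x, x - w*⟫` and the first-order bound
`L x - L w* ≤ ⟪∇L x, x - w*⟫` give
`‖x - w* - η ∇L x‖² ≤ ‖x - w*‖² - (2η - η²K) (L x - L w*)`.
The update direction `Δ_t` differs from `∇L(w_t)` by the sampling noise `∇_t - ∇L(w_t)` and the
bias `∇_t - Δ_t`. The noise is orthogonal in `L²` to every `𝒢_t`-measurable vector, in particular
to `w_t - w* - η ∇L(w_t)`; the bias costs at most `2η (D_w + ηG) 𝔼‖∇_t - Δ_t‖ ≤ 2η (D_w + ηG) B`,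
and the second-order term at most `η² σ²`. Telescoping `𝔼‖w_t - w*‖²` over the `T` steps and
dividing by `T (2η - η²K) ≥ T η` gives the rate for the chosen `η`.
-/

open MeasureTheory RealInnerProductSpace Set

section Gradient

variable {E : Type*} [NormedAddCommGroup E] [InnerProductSpace ℝ E] [CompleteSpace E]
  {f : E → ℝ} {K : ℝ}

theorem hasDerivAt_comp_lineMap (hf : Differentiable ℝ f) (x y : E) (t : ℝ) :
    HasDerivAt (fun s => f (AffineMap.lineMap x y s))
      ⟪gradient f (AffineMap.lineMap x y t), y - x⟫ t :=
  (hf _).hasGradientAt.hasFDerivAt.comp_hasDerivAt t AffineMap.hasDerivAt_lineMap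

theorem ConvexOn.add_inner_gradient_le (hconv : ConvexOn ℝ univ f) (hf : Differentiable ℝ f)
    (x y : E) : f x + ⟪gradient f x, y - x⟫ ≤ f y := by
  have hd := hasDerivAt_comp_lineMap hf x y 0
  rw [AffineMap.lineMap_apply_zero] at hd
  have h := (hconv.comp_affineMap (AffineMap.lineMap x y)).le_slope_of_hasDerivAt
    (mem_univ 0) (mem_univ 1) zero_lt_one hd
  simp only [slope, Function.comp_apply, AffineMap.lineMap_apply_one,
    AffineMap.lineMap_apply_zero, sub_zero, inv_one, one_smul, vsub_eq_sub] at h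
  linarith

theorem le_add_inner_gradient_add_half_mul_sq (hf : Differentiable ℝ f)
    (hlip : ∀ u v, ‖gradient f u - gradient f v‖ ≤ K * ‖u - v‖) (x y : E) :
    f y ≤ f x + ⟪gradient f x, y - x⟫ + K / 2 * ‖y - x‖ ^ 2 := by
  have hB (s : ℝ) :
      HasDerivAt (fun s => f x + s * ⟪gradient f x, y - x⟫ + K / 2 * s ^ 2 * ‖y - x‖ ^ 2)
        (⟪gradient f x, y - x⟫ + K * s * ‖y - x‖ ^ 2) s := by
    refine ((((hasDerivAt_id s).mul_const ⟪gradient f x, y - x⟫).const_add (f x)).add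
      (((hasDerivAt_pow 2 s).const_mul (K / 2)).mul_const (‖y - x‖ ^ 2))).congr_deriv ?_
    simp only [Nat.cast_ofNat]; ring
  have hbound (s : ℝ) (hs : s ∈ Ico (0 : ℝ) 1) :
      ⟪gradient f (AffineMap.lineMap x y s), y - x⟫
        ≤ ⟪gradient f x, y - x⟫ + K * s * ‖y - x‖ ^ 2 := by
    have hseg : AffineMap.lineMap x y s - x = s • (y - x) := AffineMap.lineMap_vsub_left x y s
    calc ⟪gradient f (AffineMap.lineMap x y s), y - x⟫
        = ⟪gradient f x, y - x⟫
          + ⟪gradient f (AffineMap.lineMap x y s) - gradient f x, y - x⟫ := by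
          rw [inner_sub_left]; ring
      _ ≤ ⟪gradient f x, y - x⟫ + K * ‖AffineMap.lineMap x y s - x‖ * ‖y - x‖ := by
          gcongr
          exact (real_inner_le_norm _ _).trans
            (mul_le_mul_of_nonneg_right (hlip _ _) (norm_nonneg _))
      _ = ⟪gradient f x, y - x⟫ + K * s * ‖y - x‖ ^ 2 := by
          rw [hseg, norm_smul, Real.norm_of_nonneg hs.1]; ring
  have h := image_le_of_deriv_right_le_deriv_boundary
    (fun s _ => (hasDerivAt_comp_lineMap hf x y s).continuousAt.continuousWithinAt)
    (fun s _ => (hasDerivAt_comp_lineMap hf x y s).hasDerivWithinAt)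
    (by simp) (fun s _ => (hB s).continuousAt.continuousWithinAt)
    (fun s _ => (hB s).hasDerivWithinAt) hbound (right_mem_Icc.2 zero_le_one)
  simpa using h

theorem ConvexOn.add_inner_gradient_add_sq_norm_div_le (hconv : ConvexOn ℝ univ f)
    (hf : Differentiable ℝ f) (hK : 0 < K)
    (hlip : ∀ u v, ‖gradient f u - gradient f v‖ ≤ K * ‖u - v‖) (x y : E) :
    f x + ⟪gradient f x, y - x⟫ + ‖gradient f y - gradient f x‖ ^ 2 / (2 * K) ≤ f y := by
  set u := gradient f y - gradient f x
  -- Bound `f z` below by convexity at `x` and above by the descent lemma at `y`.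
  set z := y - K⁻¹ • u
  have h1 := hconv.add_inner_gradient_le hf x z
  have h2 := le_add_inner_gradient_add_half_mul_sq hf hlip y z
  have hu : ⟪gradient f y, u⟫ - ⟪gradient f x, u⟫ = ‖u‖ ^ 2 := by
    rw [← inner_sub_left, real_inner_self_eq_norm_sq]
  simp only [z, sub_sub_cancel_left, show y - K⁻¹ • u - x = (y - x) - K⁻¹ • u by abel,
    inner_sub_right, inner_neg_right, real_inner_smul_right, norm_neg, norm_smul,
    Real.norm_of_nonneg (inv_nonneg.2 hK.le)] at h1 h2 ⊢
  have hgain : K⁻¹ * ⟪gradient f y, u⟫ - K⁻¹ * ⟪gradient f x, u⟫ - K / 2 * (K⁻¹ * ‖u‖) ^ 2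
      = ‖u‖ ^ 2 / (2 * K) := by
    rw [← mul_sub, hu]; field_simp; ring
  linarith

theorem ConvexOn.sq_norm_gradient_sub_le_inner (hconv : ConvexOn ℝ univ f)
    (hf : Differentiable ℝ f) (hK : 0 < K)
    (hlip : ∀ u v, ‖gradient f u - gradient f v‖ ≤ K * ‖u - v‖) (x y : E) :
    ‖gradient f x - gradient f y‖ ^ 2 ≤ K * ⟪gradient f x - gradient f y, x - y⟫ := by
  have hxy := hconv.add_inner_gradient_add_sq_norm_div_le hf hK hlip x y
  have hyx := hconv.add_inner_gradient_add_sq_norm_div_le hf hK hlip y x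
  rw [norm_sub_rev] at hxy
  have hinner : ⟪gradient f x - gradient f y, x - y⟫
      = -⟪gradient f x, y - x⟫ - ⟪gradient f y, x - y⟫ := by
    rw [← neg_sub x y, inner_neg_right, inner_sub_left]; ring
  have hdiv : ‖gradient f x - gradient f y‖ ^ 2 / (2 * K) * (2 * K)
      = ‖gradient f x - gradient f y‖ ^ 2 := by field_simp
  nlinarith

theorem ConvexOn.sq_norm_sub_sub_smul_gradient_le (hconv : ConvexOn ℝ univ f)
    (hf : Differentiable ℝ f) (hK : 0 < K)
    (hlip : ∀ u v, ‖gradient f u - gradient f v‖ ≤ K * ‖u - v‖)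
    {xstar : E} (hstar : gradient f xstar = 0) {η : ℝ} (hη : 0 ≤ η) (hηK : η * K ≤ 2) (x : E) :
    ‖x - xstar - η • gradient f x‖ ^ 2
      ≤ ‖x - xstar‖ ^ 2 - (2 * η - η ^ 2 * K) * (f x - f xstar) := by
  have hcoco := hconv.sq_norm_gradient_sub_le_inner hf hK hlip x xstar
  have hintegrable := hconv.add_inner_gradient_le hf x xstar
  rw [hstar, sub_zero] at hcoco
  rw [← neg_sub x xstar, inner_neg_right] at hintegrable
  rw [norm_sub_sq_real, real_inner_smul_right, norm_smul, Real.norm_of_nonneg hη,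
    real_inner_comm]
  nlinarith [mul_nonneg hη (sub_nonneg.2 hηK)]

theorem abs_sub_le_of_norm_gradient_le (hf : Differentiable ℝ f) {G : ℝ}
    (hG : ∀ w, ‖gradient f w‖ ≤ G) (x y : E) : |f x - f y| ≤ G * ‖x - y‖ := by
  refine Convex.norm_image_sub_le_of_norm_fderiv_le (fun w _ => hf w) (fun w _ => ?_)
    convex_univ (mem_univ y) (mem_univ x)
  simpa [gradient] using hG w

theorem ConvexOn.approx_gradient_step_le (hconv : ConvexOn ℝ univ f)
    (hf : Differentiable ℝ f) (hK : 0 < K)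
    (hlip : ∀ u v, ‖gradient f u - gradient f v‖ ≤ K * ‖u - v‖)
    {xstar : E} (hstar : gradient f xstar = 0) {η : ℝ} (hη : 0 ≤ η) (hηK : η * K ≤ 2)
    {x g Δ : E} {D G : ℝ} (hD : ‖x - xstar‖ ≤ D) (hG : ‖gradient f x‖ ≤ G) :
    (2 * η - η ^ 2 * K) * (f x - f xstar) + ‖x - xstar - η • Δ‖ ^ 2
      ≤ ‖x - xstar‖ ^ 2 + 2 * η * (D + η * G) * ‖g - Δ‖
        + η ^ 2 * (2 * ‖g - gradient f x‖ ^ 2 + 2 * ‖g - Δ‖ ^ 2)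
        - 2 * η * ⟪x - xstar - η • gradient f x, g - gradient f x⟫ := by
  set F := x - xstar - η • gradient f x
  have hcontract := hconv.sq_norm_sub_sub_smul_gradient_le hf hK hlip hstar hη hηK x
  have hsplit : x - xstar - η • Δ = F - η • ((g - gradient f x) - (g - Δ)) := by
    simp only [F]; module
  have hFnorm : ‖F‖ ≤ D + η * G := by
    refine (norm_sub_le _ _).trans (add_le_add hD ?_)
    rw [norm_smul, Real.norm_of_nonneg hη]
    exact mul_le_mul_of_nonneg_left hG hη
  have hbias : ⟪F, g - Δ⟫ ≤ (D + η * G) * ‖g - Δ‖ :=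
    (real_inner_le_norm _ _).trans (mul_le_mul_of_nonneg_right hFnorm (norm_nonneg _))
  have hpar := parallelogram_law_with_norm ℝ (g - gradient f x) (g - Δ)
  rw [hsplit, norm_sub_sq_real, real_inner_smul_right, norm_smul, Real.norm_of_nonneg hη,
    inner_sub_right]
  nlinarith [mul_self_nonneg ‖g - gradient f x + (g - Δ)‖, sq_nonneg η]

end Gradient

section Expectation

variable {Ω : Type*} {m m0 : MeasurableSpace Ω} {μ : Measure Ω}
  {E : Type*} [NormedAddCommGroup E]

theorem MeasureTheory.MemLp.integrable_inner [InnerProductSpace ℝ E] {f g : Ω → E}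
    (hf : MemLp f 2 μ) (hg : MemLp g 2 μ) :
    Integrable (fun ω => ⟪f ω, g ω⟫) μ :=
  (L2.integrable_inner (𝕜 := ℝ) (hf.toLp f) (hg.toLp g)).congr <| by
    filter_upwards [hf.coeFn_toLp, hg.coeFn_toLp] with ω hfω hgω
    rw [hfω, hgω]

theorem MeasureTheory.MemLp.integrable_sq_norm {f : Ω → E} (hf : MemLp f 2 μ) :
    Integrable (fun ω => ‖f ω‖ ^ 2) μ :=
  (memLp_two_iff_integrable_sq_norm hf.1).1 hf

theorem integral_norm_le_of_integral_sq_norm_le [IsProbabilityMeasure μ] {f : Ω → E} {B : ℝ}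
    (hf : MemLp f 2 μ) (hB : 0 ≤ B) (h : ∫ ω, ‖f ω‖ ^ 2 ∂μ ≤ B ^ 2) : ∫ ω, ‖f ω‖ ∂μ ≤ B := by
  have hvar := ProbabilityTheory.variance_nonneg (fun ω => ‖f ω‖) μ
  rw [ProbabilityTheory.variance_eq_sub hf.norm] at hvar
  simp only [Pi.pow_apply, sub_nonneg] at hvar
  exact le_of_sq_le_sq (hvar.trans h) hB

theorem integral_inner_sub_eq_zero_of_condExp_ae_eq [InnerProductSpace ℝ E] [CompleteSpace E]
    [IsFiniteMeasure μ] (hm : m ≤ m0) {F g c : Ω → E} (hF : MemLp F 2 μ)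
    (hFm : AEStronglyMeasurable[m] F μ) (hg : MemLp g 2 μ)
    (hc : μ[g|m] =ᵐ[μ] c) : ∫ ω, ⟪F ω, g ω - c ω⟫ ∂μ = 0 := by
  have horth := inner_condExpL2_eq_inner_fun (𝕜 := ℝ) hm (hg.toLp g) (hF.toLp F)
    (hFm.congr hF.coeFn_toLp.symm)
  rw [eq_comm, ← sub_eq_zero, ← inner_sub_left, L2.inner_def] at horth
  rw [← horth]
  refine integral_congr_ae ?_
  filter_upwards [Lp.coeFn_sub (hg.toLp g) (condExpL2 E ℝ hm (hg.toLp g) : Ω →₂[μ] E),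
    hF.coeFn_toLp, hg.coeFn_toLp, hg.condExpL2_ae_eq_condExp (𝕜 := ℝ) hm, hc]
    with ω hsub hFω hgω hPω hcω
  rw [hsub, Pi.sub_apply, hFω, hgω, hPω, hcω, real_inner_comm]

theorem integrable_sub_comp_of_norm_gradient_le [InnerProductSpace ℝ E] [CompleteSpace E]
    [IsFiniteMeasure μ] {f : E → ℝ} {G D : ℝ} {x : Ω → E} {y : E} (hf : Differentiable ℝ f)
    (hG : ∀ w, ‖gradient f w‖ ≤ G) (hx : AEStronglyMeasurable x μ)
    (hD : ∀ᵐ ω ∂μ, ‖x ω - y‖ ≤ D) : Integrable (fun ω => f (x ω) - f y) μ := by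
  refine Integrable.of_bound ((hf.continuous.comp_aestronglyMeasurable hx).sub
    aestronglyMeasurable_const) (G * D) (hD.mono fun ω hω => ?_)
  exact (abs_sub_le_of_norm_gradient_le hf hG _ _).trans
    (mul_le_mul_of_nonneg_left hω ((norm_nonneg _).trans (hG y)))

theorem ConvexOn.integral_approx_gradient_step_le [InnerProductSpace ℝ E] [CompleteSpace E]
    [IsProbabilityMeasure μ] {f : E → ℝ} {K G D B σ η : ℝ} {xstar : E} {x g Δ : Ω → E}
    (hconv : ConvexOn ℝ univ f) (hf : Differentiable ℝ f) (hK : 0 < K)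
    (hlip : ∀ u v, ‖gradient f u - gradient f v‖ ≤ K * ‖u - v‖)
    (hstar : gradient f xstar = 0) (hG : ∀ w, ‖gradient f w‖ ≤ G)
    (hη : 0 ≤ η) (hηK : η * K ≤ 2) (hm : m ≤ m0) (hxm : StronglyMeasurable[m] x)
    (hg : MemLp g 2 μ) (hΔ : MemLp Δ 2 μ)
    (hunbiased : μ[g|m] =ᵐ[μ] fun ω => gradient f (x ω))
    (hball : ∀ᵐ ω ∂μ, ‖x ω - xstar‖ ≤ D)
    (hσ : 2 * ∫ ω, ‖g ω - gradient f (x ω)‖ ^ 2 ∂μ + 2 * ∫ ω, ‖g ω - Δ ω‖ ^ 2 ∂μ ≤ σ ^ 2)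
    (hB : 2 * ∫ ω, ‖g ω - Δ ω‖ ^ 2 ∂μ ≤ B ^ 2) (hB0 : 0 ≤ B) :
    (2 * η - η ^ 2 * K) * ∫ ω, (f (x ω) - f xstar) ∂μ + ∫ ω, ‖x ω - xstar - η • Δ ω‖ ^ 2 ∂μ
      ≤ ∫ ω, ‖x ω - xstar‖ ^ 2 ∂μ + (2 * η * (D + η * G) * B + η ^ 2 * σ ^ 2) := by
  have hD : 0 ≤ D := (norm_nonneg _).trans hball.exists.choose_spec
  have hG0 : 0 ≤ G := (norm_nonneg _).trans (hG xstar)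
  have hgrad : Continuous (gradient f) :=
    (LipschitzWith.of_dist_le' fun u v => by simpa [dist_eq_norm] using hlip u v).continuous
  have hxae : AEStronglyMeasurable x μ := (hxm.mono hm).aestronglyMeasurable
  have hd : MemLp (fun ω => x ω - xstar) 2 μ :=
    MemLp.of_bound (hxae.sub aestronglyMeasurable_const) D hball
  have hc : MemLp (fun ω => gradient f (x ω)) 2 μ :=
    MemLp.of_bound (hgrad.comp_aestronglyMeasurable hxae) G (ae_of_all _ fun ω => hG (x ω))
  have hF : MemLp (fun ω => x ω - xstar - η • gradient f (x ω)) 2 μ := hd.sub (hc.const_smul η)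
  have hFm : AEStronglyMeasurable[m] (fun ω => x ω - xstar - η • gradient f (x ω)) μ :=
    ((hxm.sub stronglyMeasurable_const).sub
      ((hgrad.comp_stronglyMeasurable hxm).const_smul η)).aestronglyMeasurable
  have hmean := integral_inner_sub_eq_zero_of_condExp_ae_eq hm hF hFm hg hunbiased
  have hbias : ∫ ω, ‖g ω - Δ ω‖ ∂μ ≤ B :=
    integral_norm_le_of_integral_sq_norm_le (hg.sub hΔ) hB0 <| by
      nlinarith [integral_nonneg (μ := μ) (f := fun ω => ‖g ω - Δ ω‖ ^ 2) fun ω => sq_nonneg _]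
  have hpt := hball.mono fun ω hω => hconv.approx_gradient_step_le hf hK hlip
    hstar hη hηK (g := g ω) (Δ := Δ ω) hω (hG (x ω))
  have hX := integrable_sub_comp_of_norm_gradient_le hf hG hxae hball
  have Ia : Integrable (fun ω => ‖g ω - Δ ω‖) μ := ((hg.sub hΔ).integrable one_le_two).norm
  have Ia2 : Integrable (fun ω => ‖g ω - Δ ω‖ ^ 2) μ := (hg.sub hΔ).integrable_sq_norm
  have Ib2 : Integrable (fun ω => ‖g ω - gradient f (x ω)‖ ^ 2) μ :=
    (hg.sub hc).integrable_sq_norm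
  have Id2 := hd.integrable_sq_norm
  have Istep : Integrable (fun ω => ‖x ω - xstar - η • Δ ω‖ ^ 2) μ :=
    (hd.sub (hΔ.const_smul η)).integrable_sq_norm
  have Iinner : Integrable
      (fun ω => ⟪x ω - xstar - η • gradient f (x ω), g ω - gradient f (x ω)⟫) μ :=
    hF.integrable_inner (hg.sub hc)
  have h := integral_mono_ae (by fun_prop) (by fun_prop) hpt
  simp (disch := fun_prop) only [integral_add, integral_sub, integral_const_mul, hmean] at h
  have h1 : 2 * η * (D + η * G) * ∫ ω, ‖g ω - Δ ω‖ ∂μ ≤ 2 * η * (D + η * G) * B :=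
    mul_le_mul_of_nonneg_left hbias (by positivity)
  have h2 := mul_le_mul_of_nonneg_left hσ (sq_nonneg η)
  linarith

end Expectation

theorem Fin.sum_le_of_add_le_add_next {T : ℕ} (hT : 0 < T) {a u r : Fin T → ℝ} {C : ℝ}
    (hstep : ∀ t, a t + r t ≤ u t + C)
    (hnext : ∀ t : Fin T, ∀ h : (t : ℕ) + 1 < T, r t = u ⟨t + 1, h⟩)
    (hr : ∀ t, 0 ≤ r t) : ∑ t, a t ≤ u ⟨0, hT⟩ + T * C := by
  obtain ⟨n, rfl⟩ : ∃ n, T = n + 1 := ⟨T - 1, by omega⟩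
  induction n with
  | zero => simpa using (hstep 0).trans' (by linarith [hr 0])
  | succ n ih =>
    have htail : ∑ t : Fin (n + 1), a t.succ ≤ u (Fin.succ 0) + (n + 1 : ℕ) * C :=
      ih (a := a ∘ Fin.succ) (u := u ∘ Fin.succ) (r := r ∘ Fin.succ) n.succ_pos
        (fun t => hstep t.succ) (fun t h => hnext t.succ (by simp; omega)) (fun t => hr t.succ)
    have hhead : r 0 = u (Fin.succ 0) := hnext 0 (by simp)
    show _ ≤ u 0 + _
    rw [Fin.sum_univ_succ]
    push_cast at htail ⊢
    linarith [hstep 0]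

theorem one_div_mul_le_of_step_eq_min {K D σ G B T η S : ℝ} (hK : 0 < K) (hD : 0 < D)
    (hσ : 0 < σ) (hT : 0 < T) (hG : 0 ≤ G) (hB : 0 ≤ B)
    (hη : η = min (1 / K) (D / (σ * Real.sqrt T)))
    (h : (2 * η - η ^ 2 * K) * S ≤ D ^ 2 + T * (2 * η * (D + η * G) * B + η ^ 2 * σ ^ 2)) :
    1 / T * S
      ≤ D ^ 2 * K / T + D * σ / Real.sqrt T + 2 * B * D * (1 + G / (σ * Real.sqrt T)) := by
  set s := σ * Real.sqrt T
  have hs : 0 < s := by positivity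
  have hs2 : s ^ 2 = σ ^ 2 * T := by rw [mul_pow, Real.sq_sqrt hT.le]
  have hηpos : 0 < η := hη ▸ lt_min (by positivity) (by positivity)
  have hηK : η * K ≤ 1 := (le_div_iff₀ hK).1 (by simp [hη])
  have hηs : η * s ≤ D := (le_div_iff₀ hs).1 (hη ▸ min_le_right _ _)
  have hcoef : η ≤ 2 * η - η ^ 2 * K := by nlinarith
  -- `η = D / s` balances `D² / η` against `η s²`, and `η ≤ 1 / K` keeps `2η - η²K ≥ η`.
  have hdet : D ^ 2 + η ^ 2 * s ^ 2 ≤ (2 * η - η ^ 2 * K) * (D ^ 2 * K + D * s) := by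
    rcases min_choice (1 / K) (D / s) with hmin | hmin <;> rw [hmin] at hη
    · have hηK1 : η * K = 1 := by rw [hη]; field_simp
      have hηη : 2 * η - η ^ 2 * K = η := by linear_combination -η * hηK1
      have hηs2 : η ^ 2 * s ^ 2 ≤ η * D * s := by
        nlinarith [mul_le_mul_of_nonneg_left hηs (mul_nonneg hηpos.le hs.le)]
      calc D ^ 2 + η ^ 2 * s ^ 2 ≤ D ^ 2 + η * D * s := by linarith
        _ = (2 * η - η ^ 2 * K) * (D ^ 2 * K + D * s) := by
          rw [hηη]; linear_combination (-D ^ 2) * hηK1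
    · have hDη : D = η * s := by rw [hη]; field_simp
      rw [hDη]
      nlinarith [mul_nonneg (mul_nonneg (sq_nonneg η) (sq_nonneg s))
        (mul_nonneg (mul_nonneg hηpos.le hK.le) (sub_nonneg.2 hηK))]
  have hbias : η * (D + η * G) ≤ (2 * η - η ^ 2 * K) * (D + D * G / s) := by
    have hηG : η * G ≤ D * G / s := by
      rw [le_div_iff₀ hs]; nlinarith
    nlinarith [mul_nonneg hD.le hG, div_nonneg (mul_nonneg hD.le hG) hs.le]
  have hsum : S ≤ D ^ 2 * K + D * s + 2 * B * T * (D + D * G / s) := by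
    refine le_of_mul_le_mul_left ?_ (hηpos.trans_le hcoef)
    nlinarith [mul_le_mul_of_nonneg_left hbias (by positivity : 0 ≤ 2 * B * T)]
  have hsT : D * s / T = D * σ / Real.sqrt T := by
    field_simp
    linear_combination σ * Real.sq_sqrt hT.le
  calc 1 / T * S ≤ 1 / T * (D ^ 2 * K + D * s + 2 * B * T * (D + D * G / s)) := by gcongr
    _ = D ^ 2 * K / T + D * σ / Real.sqrt T + 2 * B * D * (1 + G / s) := by
      rw [← hsT]; field_simp

theorem stmt_9_general (p : ℕ) (K : ℝ) (hK : 0 < K)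
    (L : EuclideanSpace ℝ (Fin p) → ℝ)
    (hconv : ConvexOn ℝ Set.univ L)
    (hdiff : Differentiable ℝ L)
    (hlip : ∀ u v : EuclideanSpace ℝ (Fin p),
      ‖gradient L u - gradient L v‖ ≤ K * ‖u - v‖)
    (wstar : EuclideanSpace ℝ (Fin p)) (hstar : gradient L wstar = 0)
    (G Dw : ℝ) (hG : 0 ≤ G) (hDw : 0 ≤ Dw)
    (hGbound : ∀ w : EuclideanSpace ℝ (Fin p), ‖gradient L w‖ ≤ G)
    {Ω : Type*} [MeasurableSpace Ω] (μ : Measure Ω) [IsProbabilityMeasure μ]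
    (T : ℕ) (hT : 0 < T)
    (w g Δ : Fin T → Ω → EuclideanSpace ℝ (Fin p))
    (η : ℝ)
    (hg2 : ∀ t, MemLp (g t) 2 μ)
    (hΔ2 : ∀ t, MemLp (Δ t) 2 μ)
    (hupdate : ∀ t : Fin T, ∀ h : (t : ℕ) + 1 < T,
      ∀ᵐ ω ∂μ, w ⟨(t : ℕ) + 1, h⟩ ω = w t ω - η • Δ t ω)
    (𝒢 : Fin T → MeasurableSpace Ω) (h𝒢 : ∀ t, 𝒢 t ≤ ‹MeasurableSpace Ω›)
    (hwmeas : ∀ t, StronglyMeasurable[𝒢 t] (w t))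
    (hunbiased : ∀ t, μ[g t | 𝒢 t] =ᵐ[μ] fun ω => gradient L (w t ω))
    (hball : ∀ t, ∀ᵐ ω ∂μ, ‖w t ω - wstar‖ ≤ Dw)
    (σ B : ℝ) (hσ : 0 < σ) (hB : 0 ≤ B)
    (hσbound : ∀ t, 2 * ∫ ω, ‖g t ω - gradient L (w t ω)‖ ^ 2 ∂μ
        + 2 * ∫ ω, ‖g t ω - Δ t ω‖ ^ 2 ∂μ ≤ σ ^ 2)
    (hBbound : ∀ t, 2 * ∫ ω, ‖g t ω - Δ t ω‖ ^ 2 ∂μ ≤ B ^ 2)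
    (hη : η = min (1 / K) (Dw / (σ * Real.sqrt T))) :
    ∫ ω, (1 / (T : ℝ)) * ∑ t : Fin T, (L (w t ω) - L wstar) ∂μ ≤
      Dw ^ 2 * K / T + Dw * σ / Real.sqrt T
        + 2 * B * Dw * (1 + G / (σ * Real.sqrt T)) := by
  have hintegrable (t : Fin T) : Integrable (fun ω => L (w t ω) - L wstar) μ :=
    integrable_sub_comp_of_norm_gradient_le hdiff hGbound
      ((hwmeas t).mono (h𝒢 t)).aestronglyMeasurable (hball t)
  rw [integral_const_mul, integral_finsetSum _ fun t _ => hintegrable t]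
  -- `Dw = 0` forces `η = 0`, where the descent inequality says nothing; but then `w t = w*` a.s.
  obtain rfl | hDw0 := hDw.eq_or_lt
  · have hzero (t : Fin T) : ∫ ω, (L (w t ω) - L wstar) ∂μ = 0 :=
      integral_eq_zero_of_ae <| (hball t).mono fun ω hω => by
        simp [sub_eq_zero.1 (norm_le_zero_iff.1 hω)]
    simp only [hzero, Finset.sum_const_zero, mul_zero]
    positivity
  have hη0 : 0 ≤ η := hη ▸ le_min (by positivity) (by positivity)
  have hηK : η * K ≤ 2 := by
    have : η * K ≤ 1 := (le_div_iff₀ hK).1 (by simp [hη])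
    linarith
  have hstep (t : Fin T) := hconv.integral_approx_gradient_step_le hdiff hK hlip hstar hGbound
    hη0 hηK (h𝒢 t) (hwmeas t) (hg2 t) (hΔ2 t) (hunbiased t) (hball t) (hσbound t) (hBbound t) hB
  have hsum := Fin.sum_le_of_add_le_add_next hT hstep
    (fun t h => integral_congr_ae <| (hupdate t h).mono fun ω hω => by
      simp only [hω, sub_right_comm])
    (fun t => integral_nonneg fun ω => sq_nonneg _)
  have hinit : ∫ ω, ‖w ⟨0, hT⟩ ω - wstar‖ ^ 2 ∂μ ≤ Dw ^ 2 :=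
    (integral_mono_of_nonneg (ae_of_all _ fun ω => sq_nonneg _) (integrable_const (Dw ^ 2))
      ((hball ⟨0, hT⟩).mono fun ω hω => pow_le_pow_left₀ (norm_nonneg _) hω 2)).trans_eq
      (by simp)
  refine one_div_mul_le_of_step_eq_min hK hDw0 hσ (by exact_mod_cast hT) hG hB hη ?_
  rw [Finset.mul_sum]
  linarith

theorem stmt_9 (p : ℕ) (K : ℝ) (hK : 0 < K)
    (L : EuclideanSpace ℝ (Fin p) → ℝ)
    (hconv : ConvexOn ℝ Set.univ L)
    (hdiff : Differentiable ℝ L)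
    (hlip : ∀ u v : EuclideanSpace ℝ (Fin p),
      ‖gradient L u - gradient L v‖ ≤ K * ‖u - v‖)
    (wstar : EuclideanSpace ℝ (Fin p)) (hstar : gradient L wstar = 0)
    (G Dw : ℝ) (hG : 0 ≤ G) (hDw : 0 ≤ Dw)
    (hGbound : ∀ w : EuclideanSpace ℝ (Fin p), ‖gradient L w‖ ≤ G)
    {Ω : Type*} [MeasurableSpace Ω] (μ : Measure Ω) [IsProbabilityMeasure μ]
    (T : ℕ) (hT : 0 < T)
    (w g Δ : Fin T → Ω → EuclideanSpace ℝ (Fin p))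
    (η : ℝ)
    (hw2 : ∀ t, MemLp (w t) 2 μ) (hg2 : ∀ t, MemLp (g t) 2 μ)
    (hΔ2 : ∀ t, MemLp (Δ t) 2 μ)
    (hupdate : ∀ t : Fin T, ∀ h : (t : ℕ) + 1 < T,
      ∀ᵐ ω ∂μ, w ⟨(t : ℕ) + 1, h⟩ ω = w t ω - η • Δ t ω)
    (𝒢 : Fin T → MeasurableSpace Ω) (h𝒢 : ∀ t, 𝒢 t ≤ ‹MeasurableSpace Ω›)
    (hwmeas : ∀ t, StronglyMeasurable[𝒢 t] (w t))
    (hΔmeas : ∀ t, Measurable (Δ t)) (hgmeas : ∀ t, Measurable (g t))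
    (hunbiased : ∀ t, μ[g t | 𝒢 t] =ᵐ[μ] fun ω => gradient L (w t ω))
    (hball : ∀ t, ∀ᵐ ω ∂μ, ‖w t ω - wstar‖ ≤ Dw)
    (σ B : ℝ) (hσ : 0 < σ) (hB : 0 ≤ B)
    (hσbound : ∀ t, 2 * ∫ ω, ‖g t ω - gradient L (w t ω)‖ ^ 2 ∂μ
        + 2 * ∫ ω, ‖g t ω - Δ t ω‖ ^ 2 ∂μ ≤ σ ^ 2)
    (hBbound : ∀ t, 2 * ∫ ω, ‖g t ω - Δ t ω‖ ^ 2 ∂μ ≤ B ^ 2)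
    (hη : η = min (1 / K) (Dw / (σ * Real.sqrt T))) :
    ∫ ω, (1 / (T : ℝ)) * ∑ t : Fin T, (L (w t ω) - L wstar) ∂μ ≤
      Dw ^ 2 * K / T + Dw * σ / Real.sqrt T
        + 2 * B * Dw * (1 + G / (σ * Real.sqrt T)) :=
  stmt_9_general p K hK L hconv hdiff hlip wstar hstar G Dw hG hDw hGbound μ T hT w g Δ η hg2 hΔ2
    hupdate 𝒢 h𝒢 hwmeas hunbiased hball σ B hσ hB hσbound hBbound hη
end
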